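/- arXiv:2304.08489 — 4 statements merged into one kernel-verified Lean document; each statement's English description precedes it below -/
import Mathlib

section
/- Let (Ω, 𝔽, P) be a probability space, Λ > 0, N : Ω → ℕ a Poisson random variable with parameter Λ, and (X_k)_{k∈ℕ} an i.i.d. sequence with values in a measurable space E and common distribution μ, independent of N. For bounded measurable f₁, f₂, f₃ : E → ℝ set S_i = Σ_{k=0}^{N−1} f_i(X_k). Then E[S₁S₂S₃] = Λ ∫ f₁f₂f₃ dμ + Λ² (∫ f₁f₂ dμ · ∫ f₃ dμ + ∫ f₁f₃ dμ · ∫ f₂ dμ + ∫ f₂f₃ dμ · ∫ f₁ dμ) + Λ³ (∫ f₁ dμ)(∫ f₂ dμ)(∫ f₃ dμ). -/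
/-! Conditioning on `N`, which is independent of the sequence, reduces the claim to the third
moment of a sum of `n` i.i.d. terms, averaged over the Poisson law of `n`. Expanding that product
over triples `(k, l, m)`, the expectation of a term depends only on which indices coincide, so
counting triples by coincidence pattern gives
`n ∫ f₁f₂f₃ + n(n-1) (∑ ∫ fᵢfⱼ ∫ fₖ) + n(n-1)(n-2) ∫ f₁ ∫ f₂ ∫ f₃`.
The Poisson factorial moments `E[N(N-1)⋯(N-j+1)] = Λ ^ j` then turn the three descending
factorials into `Λ`, `Λ ^ 2` and `Λ ^ 3`. -/

open MeasureTheory ProbabilityTheory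
open scoped NNReal

open Finset
open scoped Nat

lemma sum_range_cube_ite (n : ℕ) (a b₁₂ b₁₃ b₂₃ c : ℝ) :
    ∑ k ∈ range n, ∑ l ∈ range n, ∑ m ∈ range n,
      (if k = l ∧ l = m then a else if k = l then b₁₂ else if k = m then b₁₃
        else if l = m then b₂₃ else c) =
      n * a + n.descFactorial 2 * (b₁₂ + b₁₃ + b₂₃) + n.descFactorial 3 * c := by
  -- inclusion–exclusion over the coincidences, so that each indicator sums separately
  have hsplit (k l m : ℕ) :
      (if k = l ∧ l = m then a else if k = l then b₁₂ else if k = m then b₁₃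
        else if l = m then b₂₃ else c) =
      c + (if k = l then b₁₂ - c else 0) + (if k = m then b₁₃ - c else 0) +
        (if l = m then b₂₃ - c else 0) +
        (if k = l ∧ l = m then a - b₁₂ - b₁₃ - b₂₃ + 2 * c else 0) := by
    split_ifs <;> grind
  simp only [hsplit, sum_add_distrib, sum_const, card_range, nsmul_eq_mul, ite_and]
  simp only [apply_ite, mul_zero, sum_ite_eq, mem_range, imp_self, implies_true, sum_ite_of_true,
    sum_const, card_range, nsmul_eq_mul, sum_ite_irrel, smul_add,
    Nat.descFactorial_succ, tsub_zero, Nat.descFactorial_zero, mul_one, Nat.cast_mul]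
  rcases n with _ | _ | n <;> simp <;> ring

lemma abs_sum_range_le {E : Type*} {f : E → ℝ} {C : ℝ} (hf : ∀ x, |f x| ≤ C) (n : ℕ)
    (y : ℕ → E) : |∑ k ∈ range n, f (y k)| ≤ n * C := by
  simpa using norm_sum_le_of_le (range n) fun k _ => (Real.norm_eq_abs _).trans_le (hf (y k))

namespace MeasureTheory

lemma integral_sum_mul_sum_mul_sum {Ω ι : Type*} [MeasurableSpace Ω] {P : Measure Ω}
    (s : Finset ι) (g₁ g₂ g₃ : ι → Ω → ℝ)
    (hg : ∀ k l m, Integrable (fun ω => g₁ k ω * g₂ l ω * g₃ m ω) P) :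
    ∫ ω, (∑ k ∈ s, g₁ k ω) * (∑ l ∈ s, g₂ l ω) * (∑ m ∈ s, g₃ m ω) ∂P =
      ∑ k ∈ s, ∑ l ∈ s, ∑ m ∈ s, ∫ ω, g₁ k ω * g₂ l ω * g₃ m ω ∂P := by
  have hexpand (ω : Ω) : (∑ k ∈ s, g₁ k ω) * (∑ l ∈ s, g₂ l ω) * (∑ m ∈ s, g₃ m ω) =
      ∑ k ∈ s, ∑ l ∈ s, ∑ m ∈ s, g₁ k ω * g₂ l ω * g₃ m ω := by
    rw [sum_mul_sum, sum_mul]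
    exact sum_congr rfl fun k _ => by rw [sum_mul_sum]
  simp_rw [hexpand]
  rw [integral_finsetSum _ fun k _ => integrable_finsetSum _ fun l _ =>
    integrable_finsetSum _ fun m _ => hg k l m]
  refine sum_congr rfl fun k _ => ?_
  rw [integral_finsetSum _ fun l _ => integrable_finsetSum _ fun m _ => hg k l m]
  exact sum_congr rfl fun l _ => integral_finsetSum _ fun m _ => hg k l m

lemma Integrable.mul_mul_of_bound {Ω : Type*} [MeasurableSpace Ω] {P : Measure Ω}
    [IsFiniteMeasure P] {g₁ g₂ g₃ : Ω → ℝ} (h₁ : AEStronglyMeasurable g₁ P)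
    (h₂ : AEStronglyMeasurable g₂ P) (h₃ : AEStronglyMeasurable g₃ P) {C₁ C₂ C₃ : ℝ}
    (hC₁ : ∀ ω, |g₁ ω| ≤ C₁) (hC₂ : ∀ ω, |g₂ ω| ≤ C₂) (hC₃ : ∀ ω, |g₃ ω| ≤ C₃) :
    Integrable (fun ω => g₁ ω * g₂ ω * g₃ ω) P :=
  ((Integrable.of_bound h₁ C₁ (.of_forall hC₁)).mul_bdd h₂ (.of_forall hC₂)).mul_bdd h₃
    (.of_forall hC₃)

end MeasureTheory

namespace ProbabilityTheory

lemma hasSum_descFactorial_poissonMeasure (r : ℝ≥0) (j : ℕ) :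
    HasSum (fun n : ℕ => Real.exp (-r) * r ^ n / n ! * (n.descFactorial j : ℝ)) ((r : ℝ) ^ j) := by
  have hshift (m : ℕ) : Real.exp (-r) * r ^ (m + j) / (m + j)! * ((m + j).descFactorial j : ℝ) =
      r ^ j * (Real.exp (-r) * r ^ m / m !) := by
    rw [Nat.add_descFactorial_eq_ascFactorial, ← Nat.factorial_mul_ascFactorial]
    have : ((m + 1).ascFactorial j : ℝ) ≠ 0 := by positivity
    push_cast
    field_simp
    ring
  have hlow : ∑ i ∈ range j, Real.exp (-r) * r ^ i / i ! * (i.descFactorial j : ℝ) = 0 :=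
    sum_eq_zero fun i hi => by simp [Nat.descFactorial_eq_zero_iff_lt.mpr (mem_range.mp hi)]
  rw [← hasSum_nat_add_iff' j, hlow, sub_zero]
  simpa only [hshift, mul_one] using (hasSum_one_poissonMeasure r).mul_left ((r : ℝ) ^ j)

lemma integrable_descFactorial_poissonMeasure (r : ℝ≥0) (j : ℕ) :
    Integrable (fun n : ℕ => (n.descFactorial j : ℝ)) (poissonMeasure r) := by
  rw [integrable_poissonMeasure_iff]
  simpa only [Real.norm_natCast] using (hasSum_descFactorial_poissonMeasure r j).summable

lemma integral_descFactorial_poissonMeasure (r : ℝ≥0) (j : ℕ) :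
    ∫ n, (n.descFactorial j : ℝ) ∂poissonMeasure r = (r : ℝ) ^ j := by
  rw [integral_poissonMeasure, ← (hasSum_descFactorial_poissonMeasure r j).tsum_eq]
  simp only [smul_eq_mul]

lemma integral_linear_descFactorial_poissonMeasure (r : ℝ≥0) (a b c : ℝ) :
    ∫ n, ((n : ℝ) * a + n.descFactorial 2 * b + n.descFactorial 3 * c) ∂poissonMeasure r =
      r * a + r ^ 2 * b + r ^ 3 * c := by
  have hint (j : ℕ) (x : ℝ) := (integrable_descFactorial_poissonMeasure r j).mul_const x
  have hint₁ (x : ℝ) : Integrable (fun n : ℕ => (n : ℝ) * x) (poissonMeasure r) := by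
    simpa only [Nat.descFactorial_one] using hint 1 x
  have hmean : ∫ n, (n : ℝ) ∂poissonMeasure r = r := by
    simpa only [Nat.descFactorial_one, pow_one] using integral_descFactorial_poissonMeasure r 1
  rw [integral_add (by exact (hint₁ a).add (hint 2 b)) (hint 3 c),
    integral_add (hint₁ a) (hint 2 b), integral_mul_const, integral_mul_const, integral_mul_const,
    hmean, integral_descFactorial_poissonMeasure, integral_descFactorial_poissonMeasure]

lemma natCast_pow_three_eq_descFactorial (n : ℕ) :
    (n : ℝ) ^ 3 = n.descFactorial 3 + 3 * n.descFactorial 2 + n.descFactorial 1 := by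
  rcases n with _ | _ | _ | n <;> simp [Nat.descFactorial_succ] <;> ring

lemma integrable_pow_three_poissonMeasure (r : ℝ≥0) :
    Integrable (fun n : ℕ => (n : ℝ) ^ 3) (poissonMeasure r) := by
  simp_rw [natCast_pow_three_eq_descFactorial]
  exact ((integrable_descFactorial_poissonMeasure r 3).add
    ((integrable_descFactorial_poissonMeasure r 2).const_mul 3)).add
    (integrable_descFactorial_poissonMeasure r 1)

lemma IndepFun.integral_comp_prodMk_eq_integral_integral {Ω α β : Type*} [MeasurableSpace Ω]
    [MeasurableSpace α] [MeasurableSpace β] {P : Measure Ω} [IsFiniteMeasure P]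
    {N : Ω → α} {Y : Ω → β} {ν : Measure α} (hNY : IndepFun N Y P) (hN : HasLaw N ν P)
    (hY : AEMeasurable Y P) {G : α × β → ℝ} (hG : Integrable G (ν.prod (P.map Y))) :
    ∫ ω, G (N ω, Y ω) ∂P = ∫ a, ∫ ω, G (a, Y ω) ∂P ∂ν := by
  have : IsFiniteMeasure ν := hN.map_eq ▸ inferInstance
  have hlaw : P.map (fun ω => (N ω, Y ω)) = ν.prod (P.map Y) := by
    rw [hNY.map_prod_eq_prod_map_map hN.aemeasurable hY, hN.map_eq]
  rw [← integral_map (hN.aemeasurable.prodMk hY) (hlaw ▸ hG.aestronglyMeasurable), hlaw,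
    integral_prod G hG]
  refine integral_congr_ae ?_
  filter_upwards [hG.prod_right_ae] with a ha
  exact integral_map hY ha.aestronglyMeasurable

section IID

variable {Ω E ι : Type*} [MeasurableSpace Ω] [MeasurableSpace E] {P : Measure Ω}
  {X : ι → Ω → E} {μ : Measure E}

lemma iIndepFun.integral_comp_mul_comp (hX : iIndepFun X P) (hXμ : ∀ k, HasLaw (X k) μ P)
    {u v : E → ℝ} (hu : Measurable u) (hv : Measurable v) {k l : ι} (hkl : k ≠ l) :
    ∫ ω, u (X k ω) * v (X l ω) ∂P = (∫ x, u x ∂μ) * ∫ x, v x ∂μ := by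
  rw [(hX.indepFun hkl).integral_fun_comp_mul_comp (hXμ k).aemeasurable (hXμ l).aemeasurable
    hu.aestronglyMeasurable hv.aestronglyMeasurable,
    ← (hXμ k).integral_comp hu.aestronglyMeasurable,
    ← (hXμ l).integral_comp hv.aestronglyMeasurable]
  rfl

lemma iIndepFun.integral_comp_mul_comp_mul_comp (hX : iIndepFun X P)
    (hXμ : ∀ k, HasLaw (X k) μ P) {u v w : E → ℝ} (hu : Measurable u) (hv : Measurable v)
    (hw : Measurable w) {k l m : ι} (hkl : k ≠ l) (hkm : k ≠ m) (hlm : l ≠ m) :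
    ∫ ω, u (X k ω) * v (X l ω) * w (X m ω) ∂P =
      (∫ x, u x ∂μ) * (∫ x, v x ∂μ) * ∫ x, w x ∂μ := by
  have huv : Measurable fun p : E × E => u p.1 * v p.2 :=
    (hu.comp measurable_fst).mul (hv.comp measurable_snd)
  have hind := hX.indepFun_prodMk₀ (fun k => (hXμ k).aemeasurable) k l m hkm hlm
  calc ∫ ω, u (X k ω) * v (X l ω) * w (X m ω) ∂P
      = (∫ ω, u (X k ω) * v (X l ω) ∂P) * ∫ ω, w (X m ω) ∂P :=
        hind.integral_fun_comp_mul_comp (f := fun p : E × E => u p.1 * v p.2)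
          ((hXμ k).aemeasurable.prodMk (hXμ l).aemeasurable)
          (hXμ m).aemeasurable huv.aestronglyMeasurable hw.aestronglyMeasurable
    _ = _ := by
      rw [hX.integral_comp_mul_comp hXμ hu hv hkl, ← (hXμ m).integral_comp hw.aestronglyMeasurable]
      rfl

lemma iIndepFun.integral_comp_mul_comp_mul_comp_eq_ite [DecidableEq ι] (hX : iIndepFun X P)
    (hXμ : ∀ k, HasLaw (X k) μ P) {f₁ f₂ f₃ : E → ℝ} (hf₁ : Measurable f₁) (hf₂ : Measurable f₂)
    (hf₃ : Measurable f₃) (k l m : ι) :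
    ∫ ω, f₁ (X k ω) * f₂ (X l ω) * f₃ (X m ω) ∂P =
      if k = l ∧ l = m then ∫ x, f₁ x * f₂ x * f₃ x ∂μ
      else if k = l then (∫ x, f₁ x * f₂ x ∂μ) * ∫ x, f₃ x ∂μ
      else if k = m then (∫ x, f₁ x * f₃ x ∂μ) * ∫ x, f₂ x ∂μ
      else if l = m then (∫ x, f₂ x * f₃ x ∂μ) * ∫ x, f₁ x ∂μ
      else (∫ x, f₁ x ∂μ) * (∫ x, f₂ x ∂μ) * ∫ x, f₃ x ∂μ := by
  split_ifs with hklm hkl hkm hlm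
  · obtain ⟨rfl, rfl⟩ := hklm
    exact (hXμ k).integral_comp ((hf₁.mul hf₂).mul hf₃).aestronglyMeasurable
  · subst hkl
    exact hX.integral_comp_mul_comp hXμ (hf₁.mul hf₂) hf₃ (by tauto)
  · subst hkm
    simp_rw [mul_right_comm (f₁ _) (f₂ _)]
    exact hX.integral_comp_mul_comp hXμ (hf₁.mul hf₃) hf₂ (by tauto)
  · subst hlm
    simp_rw [mul_assoc, mul_comm (∫ x, _ ∂μ) (∫ x, f₁ x ∂μ)]
    exact hX.integral_comp_mul_comp hXμ hf₁ (hf₂.mul hf₃) hkl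
  · exact hX.integral_comp_mul_comp_mul_comp hXμ hf₁ hf₂ hf₃ hkl hkm hlm

end IID

lemma iIndepFun.integral_sum_range_mul_sum_range_mul_sum_range {Ω E : Type*} [MeasurableSpace Ω]
    [MeasurableSpace E] {P : Measure Ω} [IsFiniteMeasure P] {μ : Measure E}
    {X : ℕ → Ω → E} (hX : iIndepFun X P) (hXμ : ∀ k, HasLaw (X k) μ P) {f₁ f₂ f₃ : E → ℝ}
    (hf₁ : Measurable f₁) (hf₂ : Measurable f₂) (hf₃ : Measurable f₃) {C₁ C₂ C₃ : ℝ}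
    (hC₁ : ∀ x, |f₁ x| ≤ C₁) (hC₂ : ∀ x, |f₂ x| ≤ C₂) (hC₃ : ∀ x, |f₃ x| ≤ C₃) (n : ℕ) :
    ∫ ω, (∑ k ∈ range n, f₁ (X k ω)) * (∑ k ∈ range n, f₂ (X k ω)) *
        (∑ k ∈ range n, f₃ (X k ω)) ∂P =
      n * ∫ x, f₁ x * f₂ x * f₃ x ∂μ +
        n.descFactorial 2 * ((∫ x, f₁ x * f₂ x ∂μ) * (∫ x, f₃ x ∂μ) +
          (∫ x, f₁ x * f₃ x ∂μ) * (∫ x, f₂ x ∂μ) + (∫ x, f₂ x * f₃ x ∂μ) * (∫ x, f₁ x ∂μ)) +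
        n.descFactorial 3 * ((∫ x, f₁ x ∂μ) * (∫ x, f₂ x ∂μ) * ∫ x, f₃ x ∂μ) := by
  have hmeas {f : E → ℝ} (hf : Measurable f) (k : ℕ) :
      AEStronglyMeasurable (fun ω => f (X k ω)) P :=
    (hf.comp_aemeasurable (hXμ k).aemeasurable).aestronglyMeasurable
  rw [integral_sum_mul_sum_mul_sum _ _ _ _ fun k l m => Integrable.mul_mul_of_bound
    (hmeas hf₁ k) (hmeas hf₂ l) (hmeas hf₃ m) (fun _ => hC₁ _) (fun _ => hC₂ _) (fun _ => hC₃ _)]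
  simp_rw [hX.integral_comp_mul_comp_mul_comp_eq_ite hXμ hf₁ hf₂ hf₃]
  exact sum_range_cube_ite ..

lemma integrable_sum_range_mul_sum_range_mul_sum_range_poissonMeasure {E : Type*}
    [MeasurableSpace E] (r : ℝ≥0) (ν : Measure (ℕ → E)) [IsFiniteMeasure ν] {f₁ f₂ f₃ : E → ℝ}
    (hf₁ : Measurable f₁) (hf₂ : Measurable f₂) (hf₃ : Measurable f₃) {C₁ C₂ C₃ : ℝ}
    (hC₁ : ∀ x, |f₁ x| ≤ C₁) (hC₂ : ∀ x, |f₂ x| ≤ C₂) (hC₃ : ∀ x, |f₃ x| ≤ C₃) :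
    Integrable (fun p : ℕ × (ℕ → E) => (∑ k ∈ range p.1, f₁ (p.2 k)) *
      (∑ k ∈ range p.1, f₂ (p.2 k)) * (∑ k ∈ range p.1, f₃ (p.2 k)))
      ((poissonMeasure r).prod ν) := by
  have hmeas {f : E → ℝ} (hf : Measurable f) (n : ℕ) :
      Measurable fun y : ℕ → E => ∑ k ∈ range n, f (y k) :=
    Finset.measurable_sum _ fun k _ => hf.comp (measurable_pi_apply k)
  refine Integrable.mono' (((integrable_pow_three_poissonMeasure r).const_mul
    (C₁ * C₂ * C₃)).comp_fst ν) (measurable_from_prod_countable_right fun n =>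
      ((hmeas hf₁ n).mul (hmeas hf₂ n)).mul (hmeas hf₃ n)).aestronglyMeasurable
    (.of_forall fun ⟨n, y⟩ => ?_)
  have h₁ := abs_sum_range_le hC₁ n y
  have h₂ := abs_sum_range_le hC₂ n y
  have h₃ := abs_sum_range_le hC₃ n y
  rw [Real.norm_eq_abs, abs_mul, abs_mul]
  calc _ ≤ (n * C₁) * (n * C₂) * (n * C₃) :=
        mul_le_mul (mul_le_mul h₁ h₂ (abs_nonneg _) ((abs_nonneg _).trans h₁)) h₃ (abs_nonneg _)
          (mul_nonneg ((abs_nonneg _).trans h₁) ((abs_nonneg _).trans h₂))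
    _ = C₁ * C₂ * C₃ * n ^ 3 := by ring

end ProbabilityTheory

theorem fenrir_poisson_sum_third_moment_general
    {Ω : Type*} [MeasurableSpace Ω] (P : Measure Ω) [IsProbabilityMeasure P]
    {E : Type*} [MeasurableSpace E]
    (Λ : ℝ≥0)
    (N : Ω → ℕ) (hN : Measurable N)
    (hNdist : Measure.map N P = poissonMeasure Λ)
    (X : ℕ → Ω → E) (hXmeas : ∀ k, Measurable (X k))
    (μ : Measure E)
    (hXdist : ∀ k, Measure.map (X k) P = μ)
    (hXindep : iIndepFun X P)
    (hNX : IndepFun N (fun ω k => X k ω) P)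
    (f₁ f₂ f₃ : E → ℝ)
    (hf₁meas : Measurable f₁) (hf₂meas : Measurable f₂) (hf₃meas : Measurable f₃)
    (hf₁bdd : ∃ C, ∀ x, |f₁ x| ≤ C) (hf₂bdd : ∃ C, ∀ x, |f₂ x| ≤ C)
    (hf₃bdd : ∃ C, ∀ x, |f₃ x| ≤ C) :
    ∫ ω, (∑ k ∈ Finset.range (N ω), f₁ (X k ω)) * (∑ k ∈ Finset.range (N ω), f₂ (X k ω)) *
        (∑ k ∈ Finset.range (N ω), f₃ (X k ω)) ∂P =
      (Λ : ℝ) * ∫ x, f₁ x * f₂ x * f₃ x ∂μ +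
        (Λ : ℝ) ^ 2 * ((∫ x, f₁ x * f₂ x ∂μ) * (∫ x, f₃ x ∂μ) +
          (∫ x, f₁ x * f₃ x ∂μ) * (∫ x, f₂ x ∂μ) +
          (∫ x, f₂ x * f₃ x ∂μ) * (∫ x, f₁ x ∂μ)) +
        (Λ : ℝ) ^ 3 * (∫ x, f₁ x ∂μ) * (∫ x, f₂ x ∂μ) * (∫ x, f₃ x ∂μ) := by
  obtain ⟨C₁, hC₁⟩ := hf₁bdd
  obtain ⟨C₂, hC₂⟩ := hf₂bdd
  obtain ⟨C₃, hC₃⟩ := hf₃bdd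
  have hXμ (k : ℕ) : HasLaw (X k) μ P := ⟨(hXmeas k).aemeasurable, hXdist k⟩
  have hY : AEMeasurable (fun ω k => X k ω) P := (measurable_pi_lambda _ hXmeas).aemeasurable
  calc _ = ∫ n : ℕ, ∫ ω, (∑ k ∈ range n, f₁ (X k ω)) * (∑ k ∈ range n, f₂ (X k ω)) *
          (∑ k ∈ range n, f₃ (X k ω)) ∂P ∂poissonMeasure Λ :=
        hNX.integral_comp_prodMk_eq_integral_integral ⟨hN.aemeasurable, hNdist⟩ hY
          (integrable_sum_range_mul_sum_range_mul_sum_range_poissonMeasure Λ _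
            hf₁meas hf₂meas hf₃meas hC₁ hC₂ hC₃)
    _ = _ := by
      simp_rw [hXindep.integral_sum_range_mul_sum_range_mul_sum_range hXμ hf₁meas hf₂meas hf₃meas
        hC₁ hC₂ hC₃]
      rw [integral_linear_descFactorial_poissonMeasure]
      ring

/-- Third-moment identity for Poissonized random sums:
if `N` is Poisson with parameter `Λ > 0` and `(X k)` is i.i.d. with common distribution `μ`,
the whole sequence independent of `N`, then for bounded measurable `f₁, f₂, f₃`, setting
`Sᵢ = ∑_{k<N} fᵢ (X k)`,
`E[S₁ S₂ S₃] = Λ ∫ f₁ f₂ f₃ dμ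
  + Λ² (∫ f₁ f₂ dμ ∫ f₃ dμ + ∫ f₁ f₃ dμ ∫ f₂ dμ + ∫ f₂ f₃ dμ ∫ f₁ dμ)
  + Λ³ (∫ f₁ dμ)(∫ f₂ dμ)(∫ f₃ dμ)`. -/
theorem fenrir_poisson_sum_third_moment
    {Ω : Type*} [MeasurableSpace Ω] (P : Measure Ω) [IsProbabilityMeasure P]
    {E : Type*} [MeasurableSpace E]
    (Λ : ℝ≥0) (hΛ : 0 < Λ)
    (N : Ω → ℕ) (hN : Measurable N)
    (hNdist : Measure.map N P = poissonMeasure Λ)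
    (X : ℕ → Ω → E) (hXmeas : ∀ k, Measurable (X k))
    (μ : Measure E) [IsProbabilityMeasure μ]
    (hXdist : ∀ k, Measure.map (X k) P = μ)
    (hXindep : iIndepFun X P)
    (hNX : IndepFun N (fun ω k => X k ω) P)
    (f₁ f₂ f₃ : E → ℝ)
    (hf₁meas : Measurable f₁) (hf₂meas : Measurable f₂) (hf₃meas : Measurable f₃)
    (hf₁bdd : ∃ C, ∀ x, |f₁ x| ≤ C) (hf₂bdd : ∃ C, ∀ x, |f₂ x| ≤ C)
    (hf₃bdd : ∃ C, ∀ x, |f₃ x| ≤ C) :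
    ∫ ω, (∑ k ∈ Finset.range (N ω), f₁ (X k ω)) * (∑ k ∈ Finset.range (N ω), f₂ (X k ω)) *
        (∑ k ∈ Finset.range (N ω), f₃ (X k ω)) ∂P =
      (Λ : ℝ) * ∫ x, f₁ x * f₂ x * f₃ x ∂μ +
        (Λ : ℝ) ^ 2 * ((∫ x, f₁ x * f₂ x ∂μ) * (∫ x, f₃ x ∂μ) +
          (∫ x, f₁ x * f₃ x ∂μ) * (∫ x, f₂ x ∂μ) +
          (∫ x, f₂ x * f₃ x ∂μ) * (∫ x, f₁ x ∂μ)) +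
        (Λ : ℝ) ^ 3 * (∫ x, f₁ x ∂μ) * (∫ x, f₂ x ∂μ) * (∫ x, f₃ x ∂μ) :=
  fenrir_poisson_sum_third_moment_general P Λ N hN hNdist X hXmeas μ hXdist hXindep hNX f₁ f₂ f₃
    hf₁meas hf₂meas hf₃meas hf₁bdd hf₂bdd hf₃bdd
end

section
/- Let W : ℝ → ℝ be integrable and bounded, let i, j : ℝ → ℝ be continuous 2π-periodic functions, and let ω, τ ∈ ℝ. Then (1/2π) ∫₀^{2π} ∫_ℝ W(t) i(φ₀ + ωt) W(t + τ) j(φ₀ + ω(t + τ)) dt dφ₀ = (∫_ℝ W(t) W(t + τ) dt) · ((1/2π) ∫₀^{2π} i(φ) j(φ + ωτ) dφ). -/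
open MeasureTheory Real
open scoped Real

/-!
Write the integrand as `(W t * W (t + τ)) * g (φ₀ + ω t)` with `g φ = i φ * j (φ + ω τ)`, which
is again `2π`-periodic. Since `g` is bounded and the window product is integrable, Fubini lets us
integrate over `φ₀` first, and by periodicity `∫₀^{2π} g (φ₀ + ω t) dφ₀` does not depend on the
shift `ω t`.
-/

namespace Function.Periodic

theorem intervalIntegral_comp_add_right {E : Type*} [NormedAddCommGroup E] [NormedSpace ℝ E]
    {f : ℝ → E} {T : ℝ} (hf : Periodic f T) (c : ℝ) :
    ∫ x in 0..T, f (x + c) = ∫ x in 0..T, f x := by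
  rw [intervalIntegral.integral_comp_add_right, zero_add, add_comm T,
    hf.intervalIntegral_add_eq c 0, zero_add]

theorem exists_forall_norm_le_of_continuous {E : Type*} [SeminormedAddCommGroup E]
    {f : ℝ → E} {T : ℝ} (hf : Periodic f T) (hT : T ≠ 0) (hc : Continuous f) :
    ∃ C, ∀ x, ‖f x‖ ≤ C := by
  obtain ⟨C, hC⟩ := (hf.isBounded_of_continuous hT hc).exists_norm_le
  exact ⟨C, fun x => hC _ ⟨x, rfl⟩⟩

theorem intervalIntegral_integral_mul_comp_add {α : Type*} [MeasurableSpace α] {μ : Measure α}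
    [SFinite μ] {g : ℝ → ℝ} {h θ : α → ℝ} {T : ℝ} (hg : Periodic g T) (hT : 0 < T)
    (hgc : Continuous g) (hh : Integrable h μ) (hθ : Measurable θ) :
    ∫ φ in 0..T, ∫ t, h t * g (φ + θ t) ∂μ = (∫ t, h t ∂μ) * ∫ φ in 0..T, g φ := by
  obtain ⟨C, hC⟩ := hg.exists_forall_norm_le_of_continuous hT.ne' hgc
  have hint : Integrable (uncurry fun φ t => h t * g (φ + θ t))
      ((volume.restrict (Set.uIoc 0 T)).prod μ) := by
    rw [Set.uIoc_of_le hT.le]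
    exact (hh.comp_snd _).mul_bdd
      (hgc.measurable.comp (measurable_fst.add (hθ.comp measurable_snd))).aestronglyMeasurable
      (ae_of_all _ fun _ => hC _)
  rw [intervalIntegral_integral_swap hint, ← integral_mul_const]
  congr 1 with t
  rw [intervalIntegral.integral_const_mul, hg.intervalIntegral_comp_add_right]

end Function.Periodic

/-- Separation of the window and periodic components of the FENRIR kernel:
for an integrable bounded window `W` and continuous `2π`-periodic functions `i, j`,
averaging over a uniform initial longitude `φ₀ ∈ [0, 2π]` factorizes the autocovariance
into the window kernel times the periodic kernel. -/
theorem fenrir_window_periodic_separation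
    (W : ℝ → ℝ) (hWint : Integrable W) (hWbdd : ∃ C, ∀ t, |W t| ≤ C)
    (i j : ℝ → ℝ) (hi : Continuous i) (hj : Continuous j)
    (hiper : Function.Periodic i (2 * π)) (hjper : Function.Periodic j (2 * π))
    (ω τ : ℝ) :
    (1 / (2 * π)) * ∫ φ₀ in (0 : ℝ)..(2 * π),
        ∫ t : ℝ, W t * i (φ₀ + ω * t) * W (t + τ) * j (φ₀ + ω * (t + τ)) =
      (∫ t : ℝ, W t * W (t + τ)) *
        ((1 / (2 * π)) * ∫ φ in (0 : ℝ)..(2 * π), i φ * j (φ + ω * τ)) := by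
  obtain ⟨C, hC⟩ := hWbdd
  have hWW : Integrable (fun t => W t * W (t + τ)) :=
    hWint.mul_bdd (hWint.comp_add_right τ).aestronglyMeasurable (ae_of_all _ fun t => hC (t + τ))
  have hperiodic : Function.Periodic (fun φ => i φ * j (φ + ω * τ)) (2 * π) :=
    hiper.mul (hjper.add_const _)
  have hsplit : ∀ φ₀ t, W t * i (φ₀ + ω * t) * W (t + τ) * j (φ₀ + ω * (t + τ)) =
      W t * W (t + τ) * (i (φ₀ + ω * t) * j (φ₀ + ω * t + ω * τ)) := fun _ _ => by ring_nf
  simp_rw [hsplit]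
  rw [hperiodic.intervalIntegral_integral_mul_comp_add (θ := fun t => ω * t) (by positivity)
    (by fun_prop) hWW (by fun_prop)]
  ring
end

section
/- Let ρ₊, ρ₋ > 0 with ρ₊ ≠ ρ₋ and define W : ℝ → ℝ by W(t) = e^{t/ρ₋} for t < 0, W(t) = e^{−t/ρ₊} for t > 0, and W(0) = 1. Then for every τ ∈ ℝ, ∫_ℝ W(t) W(t + τ) dt = ((ρ₊ + ρ₋)/2) · (ρ₊ e^{−|τ|/ρ₊} − ρ₋ e^{−|τ|/ρ₋})/(ρ₊ − ρ₋). -/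
/-!
The autocorrelation is even in `τ` (substitute `t ↦ t - τ`), so we may assume `τ ≥ 0`. The window
is continuous, equal to `e^{t/ρ₋}` on `t ≤ 0` and to `e^{-t/ρ₊}` on `t ≥ 0`, so `W(t) W(t + τ)` is a
single exponential on each of `(-∞, -τ]`, `[-τ, 0]` and `[0, ∞)`. The three elementary integrals
`ρ₋/2 · e^{-τ/ρ₋}`, `ρ₊ρ₋ (e^{-τ/ρ₊} - e^{-τ/ρ₋})/(ρ₊ - ρ₋)` and `ρ₊/2 · e^{-τ/ρ₊}` add up to the
kernel.
-/

open MeasureTheory Real Set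

theorem integral_mul_comp_add_eq_integral_mul_comp_sub {G : Type*} [MeasurableSpace G]
    [AddGroup G] [MeasurableAdd G] (μ : Measure G) [μ.IsAddRightInvariant] (f : G → ℝ) (a : G) :
    ∫ t, f t * f (t + a) ∂μ = ∫ t, f t * f (t - a) ∂μ := by
  rw [← integral_add_right_eq_self _ (-a)]
  simp only [neg_add_cancel_right, sub_eq_add_neg, mul_comm]

theorem integral_eq_setIntegral_Iic_add_intervalIntegral_add_setIntegral_Ioi
    {E : Type*} [NormedAddCommGroup E] [NormedSpace ℝ E] {μ : Measure ℝ} {f : ℝ → E} {a b : ℝ}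
    (hab : a ≤ b) (hIic : IntegrableOn f (Iic a) μ) (hIoc : IntegrableOn f (Ioc a b) μ)
    (hIoi : IntegrableOn f (Ioi b) μ) :
    ∫ t, f t ∂μ = (∫ t in Iic a, f t ∂μ) + (∫ t in a..b, f t ∂μ) + ∫ t in Ioi b, f t ∂μ := by
  rw [intervalIntegral.integral_of_le hab, add_assoc,
    ← setIntegral_union (Ioc_disjoint_Ioi le_rfl) measurableSet_Ioi hIoc hIoi,
    Ioc_union_Ioi_eq_Ioi hab]
  exact (intervalIntegral.integral_Iic_add_Ioi hIic
    (Ioc_union_Ioi_eq_Ioi hab ▸ hIoc.union hIoi)).symm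

theorem integral_exp_mul {k : ℝ} (hk : k ≠ 0) (a b : ℝ) :
    ∫ x in a..b, exp (k * x) = (exp (k * b) - exp (k * a)) / k := by
  rw [intervalIntegral.integral_comp_mul_left (fun x => exp x) hk, integral_exp, smul_eq_mul,
    inv_mul_eq_div]

noncomputable def asymExpWindow (ρp ρm t : ℝ) : ℝ :=
  if t < 0 then exp (t / ρm) else if 0 < t then exp (-t / ρp) else 1

namespace asymExpWindow

variable {ρp ρm t τ : ℝ}

theorem of_nonpos (ht : t ≤ 0) : asymExpWindow ρp ρm t = exp (t / ρm) := by
  rcases ht.lt_or_eq with ht | rfl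
  · simp [asymExpWindow, ht]
  · simp [asymExpWindow]

theorem of_nonneg (ht : 0 ≤ t) : asymExpWindow ρp ρm t = exp (-t / ρp) := by
  rcases ht.lt_or_eq with ht | rfl
  · simp [asymExpWindow, ht, ht.not_gt]
  · simp [asymExpWindow]

theorem mul_shift_of_le_neg (hτ : 0 ≤ τ) (ht : t ≤ -τ) :
    asymExpWindow ρp ρm t * asymExpWindow ρp ρm (t + τ) = exp (τ / ρm) * exp (2 / ρm * t) := by
  rw [of_nonpos (by linarith), of_nonpos (by linarith), ← exp_add, ← exp_add]
  ring_nf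

theorem mul_shift_of_mem_Icc (ht : t ∈ Icc (-τ) 0) :
    asymExpWindow ρp ρm t * asymExpWindow ρp ρm (t + τ) =
      exp (-τ / ρp) * exp ((1 / ρm - 1 / ρp) * t) := by
  rw [of_nonpos ht.2, of_nonneg (by linarith [ht.1]), ← exp_add, ← exp_add]
  ring_nf

theorem mul_shift_of_nonneg (hτ : 0 ≤ τ) (ht : 0 ≤ t) :
    asymExpWindow ρp ρm t * asymExpWindow ρp ρm (t + τ) = exp (-τ / ρp) * exp (-2 / ρp * t) := by
  rw [of_nonneg ht, of_nonneg (by linarith), ← exp_add, ← exp_add]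
  ring_nf

theorem integrableOn_Iic_mul_shift (hρm : 0 < ρm) (hτ : 0 ≤ τ) :
    IntegrableOn (fun t => asymExpWindow ρp ρm t * asymExpWindow ρp ρm (t + τ)) (Iic (-τ)) :=
  (integrableOn_congr_fun (fun _ ht => mul_shift_of_le_neg hτ ht) measurableSet_Iic).2
    ((integrableOn_exp_mul_Iic (by positivity) _).const_mul _)

theorem setIntegral_Iic_mul_shift (hρm : 0 < ρm) (hτ : 0 ≤ τ) :
    ∫ t in Iic (-τ), asymExpWindow ρp ρm t * asymExpWindow ρp ρm (t + τ) =
      ρm / 2 * exp (-τ / ρm) := by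
  rw [setIntegral_congr_fun measurableSet_Iic (fun _ ht => mul_shift_of_le_neg hτ ht),
    integral_const_mul, integral_exp_mul_Iic (by positivity), mul_div_assoc', ← exp_add,
    show τ / ρm + 2 / ρm * -τ = -τ / ρm by ring]
  field_simp

theorem integrableOn_Ioc_mul_shift :
    IntegrableOn (fun t => asymExpWindow ρp ρm t * asymExpWindow ρp ρm (t + τ)) (Ioc (-τ) 0) :=
  (integrableOn_congr_fun (fun _ ht => mul_shift_of_mem_Icc (Ioc_subset_Icc_self ht))
    measurableSet_Ioc).2 (Continuous.integrableOn_Ioc (by fun_prop))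

theorem intervalIntegral_mul_shift (hne : ρp ≠ ρm) (hρp : 0 < ρp) (hρm : 0 < ρm) (hτ : 0 ≤ τ) :
    ∫ t in -τ..0, asymExpWindow ρp ρm t * asymExpWindow ρp ρm (t + τ) =
      ρp * ρm * (exp (-τ / ρp) - exp (-τ / ρm)) / (ρp - ρm) := by
  have hk : 1 / ρm - 1 / ρp ≠ 0 := by
    rw [sub_ne_zero, one_div, one_div, Ne, inv_inj]
    exact hne.symm
  rw [intervalIntegral.integral_congr (g := fun t => exp (-τ / ρp) * exp ((1 / ρm - 1 / ρp) * t))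
      (fun _ ht => mul_shift_of_mem_Icc (by rwa [uIcc_of_le (neg_nonpos.2 hτ)] at ht)),
    intervalIntegral.integral_const_mul, integral_exp_mul hk, mul_zero, exp_zero, ← mul_div_assoc,
    mul_one_sub, ← exp_add, show -τ / ρp + (1 / ρm - 1 / ρp) * -τ = -τ / ρm by ring]
  have : ρp - ρm ≠ 0 := sub_ne_zero.2 hne
  field_simp

theorem integrableOn_Ioi_mul_shift (hρp : 0 < ρp) (hτ : 0 ≤ τ) :
    IntegrableOn (fun t => asymExpWindow ρp ρm t * asymExpWindow ρp ρm (t + τ)) (Ioi 0) :=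
  (integrableOn_congr_fun (fun _ ht => mul_shift_of_nonneg hτ (le_of_lt ht)) measurableSet_Ioi).2
    ((integrableOn_exp_mul_Ioi (div_neg_of_neg_of_pos (by norm_num) hρp) _).const_mul _)

theorem setIntegral_Ioi_mul_shift (hρp : 0 < ρp) (hτ : 0 ≤ τ) :
    ∫ t in Ioi 0, asymExpWindow ρp ρm t * asymExpWindow ρp ρm (t + τ) =
      ρp / 2 * exp (-τ / ρp) := by
  rw [setIntegral_congr_fun measurableSet_Ioi (fun _ ht => mul_shift_of_nonneg hτ (le_of_lt ht)),
    integral_const_mul, integral_exp_mul_Ioi (div_neg_of_neg_of_pos (by norm_num) hρp), mul_zero,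
    exp_zero]
  field_simp

theorem integral_mul_shift (hne : ρp ≠ ρm) (hρp : 0 < ρp) (hρm : 0 < ρm) (hτ : 0 ≤ τ) :
    ∫ t, asymExpWindow ρp ρm t * asymExpWindow ρp ρm (t + τ) =
      (ρp + ρm) / 2 * ((ρp * exp (-τ / ρp) - ρm * exp (-τ / ρm)) / (ρp - ρm)) := by
  rw [integral_eq_setIntegral_Iic_add_intervalIntegral_add_setIntegral_Ioi (neg_nonpos.2 hτ)
      (integrableOn_Iic_mul_shift hρm hτ) integrableOn_Ioc_mul_shift
      (integrableOn_Ioi_mul_shift hρp hτ),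
    setIntegral_Iic_mul_shift hρm hτ, intervalIntegral_mul_shift hne hρp hρm hτ,
    setIntegral_Ioi_mul_shift hρp hτ]
  have : ρp - ρm ≠ 0 := sub_ne_zero.2 hne
  field_simp
  ring

end asymExpWindow

/-- Autocorrelation of the asymmetric exponential window: for
`W(t) = e^{t/ρ₋}` for `t < 0`, `W(t) = e^{-t/ρ₊}` for `t > 0`, `W(0) = 1`,
`∫ W(t) W(t + τ) dt = ((ρ₊ + ρ₋)/2) (ρ₊ e^{-|τ|/ρ₊} - ρ₋ e^{-|τ|/ρ₋})/(ρ₊ - ρ₋)`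
(sum-of-Matérn-1/2 kernel). -/
theorem fenrir_window_asymmetric_exponential
    (ρp ρm : ℝ) (hρp : 0 < ρp) (hρm : 0 < ρm) (hne : ρp ≠ ρm) (W : ℝ → ℝ)
    (hW : ∀ t : ℝ, W t = if t < 0 then Real.exp (t / ρm)
      else if 0 < t then Real.exp (-t / ρp) else 1) (τ : ℝ) :
    ∫ t : ℝ, W t * W (t + τ) =
      ((ρp + ρm) / 2) *
        ((ρp * Real.exp (-|τ| / ρp) - ρm * Real.exp (-|τ| / ρm)) / (ρp - ρm)) := by
  obtain rfl : W = asymExpWindow ρp ρm := funext hW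
  rcases le_total 0 τ with hτ | hτ
  · rw [abs_of_nonneg hτ]
    exact asymExpWindow.integral_mul_shift hne hρp hρm hτ
  · rw [abs_of_nonpos hτ, integral_mul_comp_add_eq_integral_mul_comp_sub]
    simp_rw [sub_eq_add_neg]
    exact asymExpWindow.integral_mul_shift hne hρp hρm (neg_nonneg.2 hτ)
end

section
/- Let (Ω, 𝔽, P) be a probability space, λ > 0, T > 0, N : Ω → ℕ a Poisson random variable with parameter λT, and (U_k)_{k∈ℕ} an i.i.d. sequence uniformly distributed on [0, T], independent of N. Let W : ℝ → ℝ be integrable and bounded. Then for every τ ∈ ℝ, E[ ∫_ℝ (Σ_{i=0}^{N−1} W(t − U_i)) · (Σ_{j=0}^{N−1} W(t + τ − U_j)) dt ] = λT ∫_ℝ W(t) W(t + τ) dt + (λT)² ∫_ℝ w(t) w(t + τ) dt, where w(t) = (1/T) ∫₀^T W(t − u) du. -/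
/-!
Expanding the product, the time integral is the double sum `∑ᵢ ∑ⱼ K(Uᵢ, Uⱼ)` of the lag kernel
`K(x, y) = ∫ W(t - x) W(t + τ - y) dt`. A diagonal term equals `A = ∫ W(t) W(t + τ) dt` by
translation invariance; an off-diagonal term has, by independence of `Uᵢ` and `Uⱼ` and Fubini,
expectation `B = ∫ w(t) w(t + τ) dt`. So given `N = n` the expectation is `n A + n (n - 1) B`,
and since `N` is independent of the `Uᵢ`, averaging over `N` uses only the Poisson factorial
moments `E[N] = λT` and `E[N (N - 1)] = (λT)²`.
-/

open MeasureTheory ProbabilityTheory Finset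
open scoped NNReal ENNReal

lemma sum_range_sum_range_ite_eq (n : ℕ) (A B : ℝ) :
    ∑ i ∈ range n, ∑ j ∈ range n, (if i = j then A else B) = n * A + ((n : ℝ) ^ 2 - n) * B := by
  have hrow : ∀ i ∈ range n, ∑ j ∈ range n, (if i = j then A else B) = (A - B) + n * B := by
    intro i hi
    have hsplit : ∀ j, (if i = j then A else B) = (if i = j then A - B else 0) + B := by
      intro j; split_ifs <;> ring
    simp_rw [hsplit, sum_add_distrib, sum_ite_eq, if_pos hi, sum_const, card_range, nsmul_eq_mul]
  rw [sum_congr rfl hrow, sum_const, card_range, nsmul_eq_mul]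
  ring

lemma abs_sum_range_sum_range_le {f : ℕ → ℕ → ℝ} {M : ℝ} (hf : ∀ i j, |f i j| ≤ M) (n : ℕ) :
    |∑ i ∈ range n, ∑ j ∈ range n, f i j| ≤ (n : ℝ) ^ 2 * M := by
  calc |∑ i ∈ range n, ∑ j ∈ range n, f i j|
      ≤ ∑ i ∈ range n, ∑ j ∈ range n, |f i j| :=
        (abs_sum_le_sum_abs _ _).trans (sum_le_sum fun i _ ↦ abs_sum_le_sum_abs _ _)
    _ ≤ ∑ i ∈ range n, ∑ j ∈ range n, M := sum_le_sum fun i _ ↦ sum_le_sum fun j _ ↦ hf i j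
    _ = (n : ℝ) ^ 2 * M := by simp only [sum_const, card_range, nsmul_eq_mul]; ring

section Poisson

open Real Nat

lemma hasSum_descFactorial_mul_poisson (r : ℝ≥0) (k : ℕ) :
    HasSum (fun n : ℕ ↦ (n.descFactorial k : ℝ) * (exp (-r) * r ^ n / n !)) ((r : ℝ) ^ k) := by
  rw [← hasSum_nat_add_iff' k]
  have hlow : ∑ n ∈ range k, (n.descFactorial k : ℝ) * (exp (-r) * r ^ n / n !) = 0 :=
    sum_eq_zero fun n hn ↦ by simp [descFactorial_eq_zero_iff_lt.2 (mem_range.1 hn)]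
  rw [hlow, sub_zero, ← mul_one ((r : ℝ) ^ k)]
  refine ((hasSum_one_poissonMeasure r).mul_left _).congr_fun fun m ↦ ?_
  have hfac : ((m + k)! : ℝ) = m ! * (m + k).descFactorial k := by
    rw [← Nat.cast_mul, ← factorial_mul_descFactorial (Nat.le_add_left k m), Nat.add_sub_cancel]
  have hdesc : ((m + k).descFactorial k : ℝ) ≠ 0 := by simp [descFactorial_eq_zero_iff_lt]
  rw [hfac]
  field_simp
  ring

lemma hasSum_natCast_mul_poisson (r : ℝ≥0) :
    HasSum (fun n : ℕ ↦ (n : ℝ) * (exp (-r) * r ^ n / n !)) r := by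
  simpa using hasSum_descFactorial_mul_poisson r 1

lemma hasSum_natCast_sq_sub_mul_poisson (r : ℝ≥0) :
    HasSum (fun n : ℕ ↦ ((n : ℝ) ^ 2 - n) * (exp (-r) * r ^ n / n !)) ((r : ℝ) ^ 2) := by
  convert hasSum_descFactorial_mul_poisson r 2 using 2 with n
  rw [Nat.cast_descFactorial_two]
  ring

lemma integrable_natCast_sq_poissonMeasure (r : ℝ≥0) :
    Integrable (fun n : ℕ ↦ (n : ℝ) ^ 2) (poissonMeasure r) := by
  refine integrable_poissonMeasure_iff.2 <|
    ((hasSum_natCast_sq_sub_mul_poisson r).add (hasSum_natCast_mul_poisson r)).summable.congr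
      fun n ↦ ?_
  simp only [norm_pow, Real.norm_natCast]
  ring

lemma integral_poissonMeasure_factorialMoments (r : ℝ≥0) (A B : ℝ) :
    ∫ n, ((n : ℝ) * A + ((n : ℝ) ^ 2 - n) * B) ∂poissonMeasure r = r * A + (r : ℝ) ^ 2 * B := by
  rw [integral_poissonMeasure]
  refine (((hasSum_natCast_mul_poisson r).mul_right A).add
    ((hasSum_natCast_sq_sub_mul_poisson r).mul_right B)).tsum_eq ▸ tsum_congr fun n ↦ ?_
  rw [smul_eq_mul]
  ring

end Poisson

section Independence

variable {Ω β γ : Type*} [MeasurableSpace Ω] {P : Measure Ω} [IsFiniteMeasure P]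
  [MeasurableSpace β] [MeasurableSpace γ]

lemma integral_comp_eq_integral_integral_of_indepFun {X : Ω → β} {Y : Ω → γ}
    (hX : Measurable X) (hY : Measurable Y) (hXY : IndepFun X Y P) {f : β → γ → ℝ}
    (hfm : Measurable (Function.uncurry f))
    (hfi : Integrable (Function.uncurry f) ((P.map X).prod (P.map Y))) :
    ∫ ω, f (X ω) (Y ω) ∂P = ∫ x, (∫ ω, f x (Y ω) ∂P) ∂P.map X := by
  rw [indepFun_iff_map_prod_eq_prod_map_map hX.aemeasurable hY.aemeasurable] at hXY
  calc ∫ ω, f (X ω) (Y ω) ∂P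
      = ∫ p, Function.uncurry f p ∂P.map (fun ω ↦ (X ω, Y ω)) :=
        (integral_map (hX.prodMk hY).aemeasurable hfm.aestronglyMeasurable).symm
    _ = ∫ x, ∫ y, f x y ∂P.map Y ∂P.map X := by rw [hXY, integral_prod _ hfi]; rfl
    _ = ∫ x, (∫ ω, f x (Y ω) ∂P) ∂P.map X := by
        congr with x
        exact integral_map hY.aemeasurable (hfm.comp measurable_prodMk_left).aestronglyMeasurable

lemma integral_sum_sum_comp_of_pairwise_indepFun {μ : Measure β} {U : ℕ → Ω → β}
    (hU : ∀ k, Measurable (U k)) (hUlaw : ∀ k, P.map (U k) = μ)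
    (hUind : Pairwise fun i j ↦ IndepFun (U i) (U j) P) {K : β × β → ℝ} (hKm : Measurable K)
    {M : ℝ} (hKM : ∀ p, |K p| ≤ M) (n : ℕ) :
    ∫ ω, ∑ i ∈ range n, ∑ j ∈ range n, K (U i ω, U j ω) ∂P =
      n * ∫ x, K (x, x) ∂μ + ((n : ℝ) ^ 2 - n) * ∫ p, K p ∂μ.prod μ := by
  have hint : ∀ i j, Integrable (fun ω ↦ K (U i ω, U j ω)) P := fun i j ↦
    .of_bound (hKm.comp ((hU i).prodMk (hU j))).aestronglyMeasurable M (ae_of_all _ fun _ ↦ hKM _)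
  have hdiag : ∀ i, ∫ ω, K (U i ω, U i ω) ∂P = ∫ x, K (x, x) ∂μ := fun i ↦ by
    rw [← hUlaw i]
    exact (integral_map (hU i).aemeasurable
      (hKm.comp (measurable_id.prodMk measurable_id)).aestronglyMeasurable).symm
  have hoff : ∀ i j, i ≠ j → ∫ ω, K (U i ω, U j ω) ∂P = ∫ p, K p ∂μ.prod μ := fun i j hij ↦ by
    rw [← integral_map ((hU i).prodMk (hU j)).aemeasurable hKm.aestronglyMeasurable,
      (indepFun_iff_map_prod_eq_prod_map_map (hU i).aemeasurable (hU j).aemeasurable).1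
        (hUind hij), hUlaw i, hUlaw j]
  rw [← sum_range_sum_range_ite_eq, integral_finsetSum _ fun i _ ↦ integrable_finsetSum _
    fun j _ ↦ hint i j]
  refine sum_congr rfl fun i _ ↦ ?_
  rw [integral_finsetSum _ fun j _ ↦ hint i j]
  refine sum_congr rfl fun j _ ↦ ?_
  split_ifs with hij
  · exact hij ▸ hdiag i
  · exact hoff i j hij

end Independence

lemma integrable_uncurry_of_integral_abs_le {α β : Type*} [MeasurableSpace α] [MeasurableSpace β]
    {μ : Measure α} [IsFiniteMeasure μ] {ν : Measure β} [SFinite ν] {f : α → β → ℝ}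
    (hf : AEStronglyMeasurable (Function.uncurry f) (μ.prod ν)) (hfi : ∀ x, Integrable (f x) ν)
    {M : ℝ} (hM : ∀ x, ∫ y, |f x y| ∂ν ≤ M) : Integrable (Function.uncurry f) (μ.prod ν) := by
  refine (integrable_prod_iff hf).2 ⟨ae_of_all _ hfi, .of_bound hf.norm.integral_prod_right' M
    (ae_of_all _ fun x ↦ ?_)⟩
  simp only [Real.norm_eq_abs, Function.uncurry_apply_pair]
  rw [abs_of_nonneg (integral_nonneg fun _ ↦ abs_nonneg _)]
  exact hM x

lemma exists_measurable_abs_le_ae_eq {α : Type*} [MeasurableSpace α] {μ : Measure α}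
    {f : α → ℝ} (hf : AEStronglyMeasurable f μ) {C : ℝ} (hC : ∀ x, |f x| ≤ C) :
    ∃ g : α → ℝ, Measurable g ∧ (∀ x, |g x| ≤ C) ∧ f =ᵐ[μ] g := by
  have hmk := hf.stronglyMeasurable_mk.measurable
  refine ⟨fun x ↦ if |hf.mk f x| ≤ C then hf.mk f x else 0,
    .ite (measurableSet_le hmk.abs measurable_const) hmk measurable_const, fun x ↦ ?_, ?_⟩
  · dsimp only
    split_ifs with h
    · exact h
    · simpa using (abs_nonneg _).trans (hC x)
  · filter_upwards [hf.ae_eq_mk] with x hx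
    rw [← hx, if_pos (hC x)]

section LagKernel

variable {W : ℝ → ℝ} {C : ℝ}

/-- The lag-`τ` correlation of two granules born at times `x` and `y`. -/
noncomputable def lagKernel (W : ℝ → ℝ) (τ : ℝ) (p : ℝ × ℝ) : ℝ :=
  ∫ t, W (t - p.1) * W (t + τ - p.2)

lemma integrable_comp_sub_mul (hW : Integrable W) {h : ℝ → ℝ} (hh : AEStronglyMeasurable h)
    (hhC : ∀ t, |h t| ≤ C) (a : ℝ) : Integrable fun t ↦ W (t - a) * h t :=
  (hW.comp_sub_right a).mul_bdd hh (ae_of_all _ hhC)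

lemma integral_abs_comp_sub_mul_le (hW : Integrable W) {h : ℝ → ℝ} (hh : AEStronglyMeasurable h)
    (hhC : ∀ t, |h t| ≤ C) (a : ℝ) : ∫ t, |W (t - a) * h t| ≤ C * ∫ t, |W t| :=
  calc ∫ t, |W (t - a) * h t|
      ≤ ∫ t, C * |W (t - a)| :=
        integral_mono (integrable_comp_sub_mul hW hh hhC a).abs
          ((hW.comp_sub_right a).abs.const_mul C) fun t ↦ by
            rw [abs_mul, mul_comm]; exact mul_le_mul_of_nonneg_right (hhC t) (abs_nonneg _)
    _ = C * ∫ t, |W t| := by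
        rw [integral_const_mul, integral_sub_right_eq_self (fun t ↦ |W t|) a]

lemma measurable_integral_comp_sub (hWm : Measurable W) (μ : Measure ℝ) [SFinite μ] :
    Measurable fun s ↦ ∫ y, W (s - y) ∂μ :=
  (hWm.comp (measurable_fst.sub measurable_snd)).stronglyMeasurable.integral_prod_right'.measurable

lemma abs_integral_comp_sub_le (hWC : ∀ t, |W t| ≤ C) (μ : Measure ℝ) [IsProbabilityMeasure μ]
    (s : ℝ) : |∫ y, W (s - y) ∂μ| ≤ C := by
  simpa using norm_integral_le_of_norm_le_const (μ := μ) (f := fun y ↦ W (s - y))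
    (ae_of_all _ fun y ↦ hWC (s - y))

lemma measurable_lagKernel (hWm : Measurable W) (τ : ℝ) : Measurable (lagKernel W τ) := by
  have : Measurable fun q : (ℝ × ℝ) × ℝ ↦ W (q.2 - q.1.1) * W (q.2 + τ - q.1.2) := by fun_prop
  exact this.stronglyMeasurable.integral_prod_right'.measurable

lemma abs_lagKernel_le (hWm : Measurable W) (hW : Integrable W) (hWC : ∀ t, |W t| ≤ C)
    (τ : ℝ) (p : ℝ × ℝ) : |lagKernel W τ p| ≤ C * ∫ t, |W t| :=
  abs_integral_le_integral_abs.trans <| integral_abs_comp_sub_mul_le hW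
    (by fun_prop : Measurable fun t ↦ W (t + τ - p.2)).aestronglyMeasurable (fun t ↦ hWC _) p.1

lemma lagKernel_self (τ x : ℝ) : lagKernel W τ (x, x) = ∫ t, W t * W (t + τ) := by
  rw [lagKernel, ← integral_sub_right_eq_self (fun t ↦ W t * W (t + τ)) x]
  simp only [sub_add_eq_add_sub]

lemma integral_sum_mul_sum_eq_sum_lagKernel (hWm : Measurable W) (hW : Integrable W)
    (hWC : ∀ t, |W t| ≤ C) (τ : ℝ) (n : ℕ) (u : ℕ → ℝ) :
    ∫ t, (∑ i ∈ range n, W (t - u i)) * (∑ j ∈ range n, W (t + τ - u j)) =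
      ∑ i ∈ range n, ∑ j ∈ range n, lagKernel W τ (u i, u j) := by
  have hint : ∀ i j, Integrable fun t ↦ W (t - u i) * W (t + τ - u j) := fun i j ↦
    integrable_comp_sub_mul hW
      (by fun_prop : Measurable fun t ↦ W (t + τ - u j)).aestronglyMeasurable (fun t ↦ hWC _) (u i)
  simp_rw [sum_mul_sum]
  rw [integral_finsetSum _ fun i _ ↦ integrable_finsetSum _ fun j _ ↦ hint i j]
  exact sum_congr rfl fun i _ ↦ integral_finsetSum _ fun j _ ↦ hint i j

lemma integral_lagKernel_left_eq (hWm : Measurable W) (hW : Integrable W) (hWC : ∀ t, |W t| ≤ C)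
    (τ x : ℝ) (ν : Measure ℝ) [IsProbabilityMeasure ν] :
    ∫ y, lagKernel W τ (x, y) ∂ν = ∫ t, W (t - x) * ∫ y, W (t + τ - y) ∂ν := by
  have hint : Integrable (Function.uncurry fun y t ↦ W (t - x) * W (t + τ - y)) (ν.prod volume) :=
    integrable_uncurry_of_integral_abs_le (by fun_prop : Measurable _).aestronglyMeasurable
      (fun y ↦ integrable_comp_sub_mul hW
        (by fun_prop : Measurable fun t ↦ W (t + τ - y)).aestronglyMeasurable (fun t ↦ hWC _) x)
      (fun y ↦ integral_abs_comp_sub_mul_le hW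
        (by fun_prop : Measurable fun t ↦ W (t + τ - y)).aestronglyMeasurable (fun t ↦ hWC _) x)
  simp_rw [lagKernel, integral_integral_swap hint, integral_const_mul]

lemma integral_lagKernel_prod (hWm : Measurable W) (hW : Integrable W) (hWC : ∀ t, |W t| ≤ C)
    (τ : ℝ) (μ ν : Measure ℝ) [IsProbabilityMeasure μ] [IsProbabilityMeasure ν] :
    ∫ p, lagKernel W τ p ∂μ.prod ν =
      ∫ t, (∫ x, W (t - x) ∂μ) * ∫ y, W (t + τ - y) ∂ν := by
  set wν := fun s ↦ ∫ y, W (s - y) ∂ν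
  have hwνm : Measurable wν := measurable_integral_comp_sub hWm ν
  have hwνC : ∀ s, |wν s| ≤ C := abs_integral_comp_sub_le hWC ν
  have hK : Integrable (lagKernel W τ) (μ.prod ν) :=
    .of_bound (measurable_lagKernel hWm τ).aestronglyMeasurable _
      (ae_of_all _ (abs_lagKernel_le hWm hW hWC τ))
  have hint : Integrable (Function.uncurry fun x t ↦ W (t - x) * wν (t + τ)) (μ.prod volume) :=
    integrable_uncurry_of_integral_abs_le (by fun_prop : Measurable _).aestronglyMeasurable
      (fun x ↦ integrable_comp_sub_mul hW
        (by fun_prop : Measurable fun t ↦ wν (t + τ)).aestronglyMeasurable (fun t ↦ hwνC _) x)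
      (fun x ↦ integral_abs_comp_sub_mul_le hW
        (by fun_prop : Measurable fun t ↦ wν (t + τ)).aestronglyMeasurable (fun t ↦ hwνC _) x)
  rw [integral_prod _ hK]
  simp_rw [integral_lagKernel_left_eq hWm hW hWC τ _ ν]
  exact (integral_integral_swap hint).trans (by simp_rw [integral_mul_const]; rfl)

end LagKernel

theorem integral_integral_sum_mul_sum_of_poisson {Ω : Type*} [MeasurableSpace Ω] {P : Measure Ω}
    [IsProbabilityMeasure P] {r : ℝ≥0} {N : Ω → ℕ} (hN : Measurable N)
    (hNlaw : P.map N = poissonMeasure r) {μ : Measure ℝ} {U : ℕ → Ω → ℝ}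
    (hU : ∀ k, Measurable (U k)) (hUlaw : ∀ k, P.map (U k) = μ) (hUind : iIndepFun U P)
    (hNU : IndepFun N (fun ω k ↦ U k ω) P) {W : ℝ → ℝ} (hWm : Measurable W) (hW : Integrable W)
    {C : ℝ} (hWC : ∀ t, |W t| ≤ C) (τ : ℝ) :
    ∫ ω, (∫ t, (∑ i ∈ range (N ω), W (t - U i ω)) * (∑ j ∈ range (N ω), W (t + τ - U j ω))) ∂P =
      r * (∫ t, W t * W (t + τ)) +
        (r : ℝ) ^ 2 * ∫ t, (∫ x, W (t - x) ∂μ) * ∫ y, W (t + τ - y) ∂μ := by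
  have : IsProbabilityMeasure μ := hUlaw 0 ▸ Measure.isProbabilityMeasure_map (hU 0).aemeasurable
  set X : Ω → ℕ → ℝ := fun ω k ↦ U k ω
  set Φ : ℕ → (ℕ → ℝ) → ℝ := fun n u ↦ ∑ i ∈ range n, ∑ j ∈ range n, lagKernel W τ (u i, u j)
  have hX : Measurable X := measurable_pi_lambda _ hU
  have hΦm : Measurable (Function.uncurry Φ) :=
    measurable_from_prod_countable_right fun n ↦ Finset.measurable_sum (range n) fun i _ ↦
      Finset.measurable_sum (range n) fun j _ ↦
        (measurable_lagKernel hWm τ).comp ((measurable_pi_apply i).prodMk (measurable_pi_apply j))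
  have hΦi : Integrable (Function.uncurry Φ) ((P.map N).prod (P.map X)) := by
    rw [hNlaw]
    refine (((integrable_natCast_sq_poissonMeasure r).comp_fst _).mul_const (C * ∫ t, |W t|)).mono'
      hΦm.aestronglyMeasurable (ae_of_all _ fun p ↦ ?_)
    exact abs_sum_range_sum_range_le (fun i j ↦ abs_lagKernel_le hWm hW hWC τ _) p.1
  have hΦ : ∀ n : ℕ, ∫ ω, Φ n (X ω) ∂P =
      n * (∫ t, W t * W (t + τ)) + ((n : ℝ) ^ 2 - n) *
        ∫ t, (∫ x, W (t - x) ∂μ) * ∫ y, W (t + τ - y) ∂μ := fun n ↦ by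
    rw [integral_sum_sum_comp_of_pairwise_indepFun hU hUlaw (fun i j ↦ hUind.indepFun)
      (measurable_lagKernel hWm τ) (abs_lagKernel_le hWm hW hWC τ),
      integral_lagKernel_prod hWm hW hWC, integral_congr_ae (ae_of_all _ (lagKernel_self τ)),
      integral_const, probReal_univ, one_smul]
  calc _ = ∫ ω, Φ (N ω) (X ω) ∂P := by
        simp_rw [integral_sum_mul_sum_eq_sum_lagKernel hWm hW hWC]
        rfl
    _ = ∫ n, (∫ ω, Φ n (X ω) ∂P) ∂P.map N :=
        integral_comp_eq_integral_integral_of_indepFun hN hX hNU hΦm hΦi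
    _ = _ := by simp_rw [hΦ, hNlaw, integral_poissonMeasure_factorialMoments]

lemma integral_sum_mul_sum_congr_ae {W V : ℝ → ℝ} (hWV : W =ᵐ[volume] V) (τ : ℝ) (n : ℕ)
    (u : ℕ → ℝ) :
    ∫ t, (∑ i ∈ range n, W (t - u i)) * (∑ j ∈ range n, W (t + τ - u j)) =
      ∫ t, (∑ i ∈ range n, V (t - u i)) * (∑ j ∈ range n, V (t + τ - u j)) := by
  have hsub (a : ℝ) : ∀ᵐ t, W (t - a) = V (t - a) :=
    (measurePreserving_sub_right volume a).quasiMeasurePreserving.ae hWV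
  have hlag (a : ℝ) : ∀ᵐ t, W (t + τ - a) = V (t + τ - a) :=
    (measurePreserving_add_right volume τ).quasiMeasurePreserving.ae (hsub a)
  refine integral_congr_ae ?_
  filter_upwards [ae_all_iff.2 fun i ↦ hsub (u i), ae_all_iff.2 fun j ↦ hlag (u j)]
    with t hi hj
  simp only [hi, hj]

lemma integral_smul_restrict_Icc {T : ℝ} (hT : 0 ≤ T) (f : ℝ → ℝ) :
    ∫ y, f y ∂(ENNReal.ofReal T)⁻¹ • volume.restrict (Set.Icc 0 T) =
      1 / T * ∫ u in 0..T, f u := by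
  rw [integral_smul_measure, ENNReal.toReal_inv, ENNReal.toReal_ofReal hT,
    integral_Icc_eq_integral_Ioc, ← intervalIntegral.integral_of_le hT, smul_eq_mul, one_div]

/-- Covariance kernel of the granulation model: within a packet, a Poisson number `N`
(of parameter `λ T`) of granules with common profile `W` appear at i.i.d. uniform times
on `[0, T]`; the expected lagged product integrates to the sum of the single-granule
autocorrelation (weight `λT`) and the autocorrelation of the time-averaged profile `w`
(weight `(λT)²`). -/
theorem fenrir_granulation_kernel
    {Ω : Type*} [MeasurableSpace Ω] (P : Measure Ω) [IsProbabilityMeasure P]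
    (lam T : ℝ) (hlam : 0 < lam) (hT : 0 < T)
    (N : Ω → ℕ) (hN : Measurable N)
    (hNdist : Measure.map N P = poissonMeasure (⟨lam * T, by positivity⟩ : ℝ≥0))
    (U : ℕ → Ω → ℝ) (hUmeas : ∀ k, Measurable (U k))
    (hUdist : ∀ k, Measure.map (U k) P =
      (ENNReal.ofReal T)⁻¹ • volume.restrict (Set.Icc (0 : ℝ) T))
    (hUindep : iIndepFun U P)
    (hNU : IndepFun N (fun ω k => U k ω) P)
    (W : ℝ → ℝ) (hWint : Integrable W) (hWbdd : ∃ C, ∀ t, |W t| ≤ C)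
    (w : ℝ → ℝ) (hw : ∀ t : ℝ, w t = (1 / T) * ∫ u in (0 : ℝ)..T, W (t - u))
    (τ : ℝ) :
    ∫ ω, (∫ t : ℝ, (∑ i ∈ Finset.range (N ω), W (t - U i ω)) *
        (∑ j ∈ Finset.range (N ω), W (t + τ - U j ω))) ∂P =
      lam * T * (∫ t : ℝ, W t * W (t + τ)) +
        (lam * T) ^ 2 * ∫ t : ℝ, w t * w (t + τ) := by
  obtain ⟨C, hWC⟩ := hWbdd
  -- Every term is unchanged by modifying `W` on a null set, so `W` may be taken measurable.
  obtain ⟨V, hVm, hVC, hWV⟩ := exists_measurable_abs_le_ae_eq hWint.aestronglyMeasurable hWC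
  have hauto : ∫ t, W t * W (t + τ) = ∫ t, V t * V (t + τ) := integral_congr_ae <|
    hWV.mul ((measurePreserving_add_right volume τ).quasiMeasurePreserving.ae hWV)
  have hwV (t : ℝ) :
      w t = ∫ y, V (t - y) ∂(ENNReal.ofReal T)⁻¹ • volume.restrict (Set.Icc 0 T) := by
    rw [hw, integral_smul_restrict_Icc hT.le]
    congr 1
    refine intervalIntegral.integral_congr_ae ?_
    filter_upwards [(Measure.measurePreserving_sub_left volume t).quasiMeasurePreserving.ae hWV]
      with u hu _ using hu
  simp_rw [integral_sum_mul_sum_congr_ae hWV, hauto, hwV]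
  exact integral_integral_sum_mul_sum_of_poisson hN hNdist hUmeas hUdist hUindep hNU hVm
    (hWint.congr hWV) hVC τ
end
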